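/- Let d ≥ 2 be an integer, let μ be the uniform probability measure on the unit sphere S^{d−1} ⊆ ℝ^d, and define h(z, z′) = (arccos⟨z, z′⟩ − π/2)². Then for every z ∈ S^{d−1}, ∫_{S^{d−1}} h(z, z′) dμ(z′) = β_d, where β_d = π²/4 − 2∑_{j=0}^{s} 1/(2j+1)² if d − 2 = 2s + 1 is odd, and β_d = π²/12 − 2∑_{j=1}^{s} 1/(2j)² if d − 2 = 2s is even. -/

import Mathlib

open MeasureTheory Metric Real
open scoped RealInnerProductSpace

/-- The uniform (rotation-invariant) probability measure on the unit sphere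
`S^{d-1} ⊆ ℝ^d`, viewed as a measure on the ambient space `ℝ^d`. -/
noncomputable def uniformSphere (d : ℕ) : Measure (EuclideanSpace ℝ (Fin d)) :=
  ((volume : Measure (EuclideanSpace ℝ (Fin d))).toSphere Set.univ)⁻¹ •
    Measure.map Subtype.val (volume : Measure (EuclideanSpace ℝ (Fin d))).toSphere

/-- `β_d`: if `d - 2 = 2s + 1` is odd, `β_d = π²/4 − 2∑_{j=0}^{s} 1/(2j+1)²`;
if `d - 2 = 2s` is even, `β_d = π²/12 − 2∑_{j=1}^{s} 1/(2j)²`. -/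
noncomputable def betaDim (d : ℕ) : ℝ :=
  if Odd (d - 2) then
    π ^ 2 / 4 - 2 * ∑ j ∈ Finset.range ((d - 2) / 2 + 1), (1 : ℝ) / (2 * (j : ℝ) + 1) ^ 2
  else
    π ^ 2 / 12 - 2 * ∑ j ∈ Finset.Icc 1 ((d - 2) / 2), (1 : ℝ) / (2 * (j : ℝ)) ^ 2

/-!
Write `θ = arccos ⟪z, u⟫`. The image of the uniform measure on `S^{d-1}` under `u ↦ θ` has density
proportional to `sin θ ^ (d - 2)` on `(0, π)`. To see this, integrate `g (⟪z, x⟫ / ‖x‖)` times a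
radial cutoff over `ℝ^d` in two ways: in spherical coordinates, and after rotating `z` to the first
basis vector, in the coordinates `(t, w) ∈ ℝ × ℝ^{d-1}`, then polar coordinates `s = ‖w‖` in
`ℝ^{d-1}` and planar polar coordinates `(t, s) = r (cos θ, sin θ)`, which separate `r` from `θ`.

Hence the integral is `J_{d-2} / W_{d-2}`, where `W_n = ∫₀^π sin^n θ` and
`J_n = ∫₀^π (θ - π/2)² sin^n θ`. Integration by parts gives
`J_{n+2} = (n+1)/(n+2) J_n - 2/(n+2)² W_{n+2}` next to Wallis' `W_{n+2} = (n+1)/(n+2) W_n`, so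
`J_n / W_n` and `β_{n+2}` satisfy the same recursion `β_{n+4} = β_{n+2} - 2/(n+2)²` and agree for
`n = 0, 1`.
-/

open Set Module Function intervalIntegral
open scoped ENNReal

local notation "ℝ^" n:max => EuclideanSpace ℝ (Fin n)

noncomputable def sinPowIntegral (n : ℕ) : ℝ := ∫ θ in 0..π, sin θ ^ n

noncomputable def centeredSqSinPowIntegral (n : ℕ) : ℝ :=
  ∫ θ in 0..π, (θ - π / 2) ^ 2 * sin θ ^ n

lemma sinPowIntegral_pos (n : ℕ) : 0 < sinPowIntegral n :=
  intervalIntegral_pos_of_pos_on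
    ((by fun_prop : Continuous fun θ => sin θ ^ n).intervalIntegrable _ _)
    (fun _ hθ => pow_pos (sin_pos_of_pos_of_lt_pi hθ.1 hθ.2) n) pi_pos

lemma sinPowIntegral_add_two (n : ℕ) :
    sinPowIntegral (n + 2) = (n + 1) / (n + 2) * sinPowIntegral n := by
  simpa [sinPowIntegral] using integral_sin_pow (a := 0) (b := π) n

lemma centeredSqSinPowIntegral_zero : centeredSqSinPowIntegral 0 = π ^ 3 / 12 := by
  simp only [centeredSqSinPowIntegral, pow_zero, mul_one]
  rw [integral_comp_sub_right (· ^ 2) (π / 2), integral_pow]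
  ring

lemma centeredSqSinPowIntegral_one : centeredSqSinPowIntegral 1 = π ^ 2 / 2 - 4 := by
  have hderiv : ∀ θ ∈ uIcc 0 π, HasDerivAt
      (fun θ => 2 * (θ - π / 2) * sin θ - ((θ - π / 2) ^ 2 - 2) * cos θ)
      ((θ - π / 2) ^ 2 * sin θ ^ 1) θ := by
    intro θ _
    have hu : HasDerivAt (fun θ : ℝ => θ - π / 2) 1 θ := (hasDerivAt_id θ).sub_const _
    refine (((hu.const_mul 2).fun_mul (hasDerivAt_sin θ)).fun_sub
      (((hu.fun_pow 2).sub_const 2).fun_mul (hasDerivAt_cos θ))).congr_deriv ?_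
    ring
  rw [centeredSqSinPowIntegral, integral_eq_sub_of_hasDerivAt hderiv
    (by apply Continuous.intervalIntegrable; fun_prop)]
  simp only [sin_pi, cos_pi, sin_zero, cos_zero]
  ring

lemma integral_sub_pi_div_two_mul_sin_pow_succ_mul_cos (n : ℕ) :
    ∫ θ in 0..π, (θ - π / 2) * (sin θ ^ (n + 1) * cos θ) =
      -(sinPowIntegral (n + 2) / (n + 2)) := by
  have hv : ∀ θ ∈ uIcc 0 π,
      HasDerivAt (fun θ => sin θ ^ (n + 2) / (n + 2)) (sin θ ^ (n + 1) * cos θ) θ := by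
    intro θ _
    refine (((hasDerivAt_sin θ).fun_pow (n + 2)).div_const ((n : ℝ) + 2)).congr_deriv ?_
    push_cast
    field_simp
  rw [integral_mul_deriv_eq_deriv_mul (fun θ _ => (hasDerivAt_id' θ).sub_const (π / 2)) hv
    (by apply Continuous.intervalIntegrable; fun_prop)
    (by apply Continuous.intervalIntegrable; fun_prop)]
  simp [sinPowIntegral, intervalIntegral.integral_div]

lemma integral_sub_pi_div_two_sq_mul_deriv_sin_pow_succ_mul_cos (n : ℕ) :
    ∫ θ in 0..π, (θ - π / 2) ^ 2 * ((n + 1) * sin θ ^ n - (n + 2) * sin θ ^ (n + 2)) =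
      2 * sinPowIntegral (n + 2) / (n + 2) := by
  have hu : ∀ θ ∈ uIcc 0 π, HasDerivAt (fun θ => (θ - π / 2) ^ 2) (2 * (θ - π / 2)) θ := by
    intro θ _
    simpa using ((hasDerivAt_id θ).sub_const (π / 2)).fun_pow 2
  have hv : ∀ θ ∈ uIcc 0 π, HasDerivAt (fun θ => sin θ ^ (n + 1) * cos θ)
      ((n + 1) * sin θ ^ n - (n + 2) * sin θ ^ (n + 2)) θ := by
    intro θ _
    refine (((hasDerivAt_sin θ).fun_pow (n + 1)).fun_mul (hasDerivAt_cos θ)).congr_deriv ?_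
    rw [Nat.add_sub_cancel]
    push_cast
    linear_combination ((n : ℝ) + 1) * sin θ ^ n * cos_sq_add_sin_sq θ
  rw [integral_mul_deriv_eq_deriv_mul hu hv
    (by apply Continuous.intervalIntegrable; fun_prop)
    (by apply Continuous.intervalIntegrable; fun_prop)]
  simp only [sin_pi, sin_zero, zero_pow n.succ_ne_zero, zero_mul, mul_zero, sub_zero, zero_sub]
  simp_rw [mul_assoc]
  rw [intervalIntegral.integral_const_mul, integral_sub_pi_div_two_mul_sin_pow_succ_mul_cos]
  ring

lemma centeredSqSinPowIntegral_add_two (n : ℕ) :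
    centeredSqSinPowIntegral (n + 2) = (n + 1) / (n + 2) * centeredSqSinPowIntegral n -
      2 / (n + 2) ^ 2 * sinPowIntegral (n + 2) := by
  have h := integral_sub_pi_div_two_sq_mul_deriv_sin_pow_succ_mul_cos n
  simp only [mul_sub] at h
  rw [intervalIntegral.integral_sub (by apply Continuous.intervalIntegrable; fun_prop)
    (by apply Continuous.intervalIntegrable; fun_prop)] at h
  simp only [mul_left_comm _ ((n : ℝ) + _), intervalIntegral.integral_const_mul] at h
  change (n + 1) * centeredSqSinPowIntegral n - (n + 2) * centeredSqSinPowIntegral (n + 2) = _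
    at h
  field_simp at h ⊢
  linear_combination -h

lemma betaDim_add_four (m : ℕ) :
    betaDim (m + 4) = betaDim (m + 2) - 2 / ((m : ℝ) + 2) ^ 2 := by
  rcases Nat.even_or_odd' m with ⟨s, rfl | rfl⟩
  · have h₄ : ¬Odd (2 * s + 4 - 2) := by rw [Nat.not_odd_iff_even]; exact ⟨s + 1, by omega⟩
    have h₂ : ¬Odd (2 * s + 2 - 2) := by rw [Nat.not_odd_iff_even]; exact ⟨s, by omega⟩
    rw [betaDim, betaDim, if_neg h₄, if_neg h₂, show (2 * s + 4 - 2) / 2 = s + 1 by omega,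
      show (2 * s + 2 - 2) / 2 = s by omega, Finset.sum_Icc_succ_top (by omega)]
    push_cast
    field_simp
    ring
  · have h₄ : Odd (2 * s + 1 + 4 - 2) := ⟨s + 1, by omega⟩
    have h₂ : Odd (2 * s + 1 + 2 - 2) := ⟨s, by omega⟩
    rw [betaDim, betaDim, if_pos h₄, if_pos h₂, show (2 * s + 1 + 4 - 2) / 2 = s + 1 by omega,
      show (2 * s + 1 + 2 - 2) / 2 = s by omega, Finset.sum_range_succ]
    push_cast
    field_simp
    ring

lemma centeredSqSinPowIntegral_eq_betaDim_mul (n : ℕ) :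
    centeredSqSinPowIntegral n = betaDim (n + 2) * sinPowIntegral n := by
  induction n using Nat.twoStepInduction with
  | zero => simp [centeredSqSinPowIntegral_zero, betaDim, sinPowIntegral]; ring
  | one =>
    rw [centeredSqSinPowIntegral_one, sinPowIntegral, betaDim]
    norm_num
    ring
  | more m ih _ =>
    rw [centeredSqSinPowIntegral_add_two, ih, sinPowIntegral_add_two, betaDim_add_four]
    field_simp

section PolarDecomposition

variable {E : Type*} [NormedAddCommGroup E] [NormedSpace ℝ E] [FiniteDimensional ℝ E]
  [MeasurableSpace E] [BorelSpace E] [Nontrivial E] (μ : Measure E) [μ.IsAddHaarMeasure]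

theorem lintegral_comp_smul_inv_norm_mul_comp_norm {g : E → ℝ≥0∞} {h : ℝ → ℝ≥0∞}
    (hg : Measurable g) (hh : Measurable h) :
    ∫⁻ x, g (‖x‖⁻¹ • x) * h ‖x‖ ∂μ =
      (∫⁻ u : sphere (0 : E) 1, g u ∂μ.toSphere) *
        ∫⁻ r in Ioi 0, ENNReal.ofReal (r ^ (finrank ℝ E - 1)) * h r := by
  calc ∫⁻ x, g (‖x‖⁻¹ • x) * h ‖x‖ ∂μ
      = ∫⁻ x : ({0}ᶜ : Set E), g (‖(x : E)‖⁻¹ • x) * h ‖(x : E)‖ ∂μ.comap Subtype.val := by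
        rw [lintegral_subtype_comap (measurableSet_singleton _).compl
          (fun x => g (‖x‖⁻¹ • x) * h ‖x‖), restrict_compl_singleton]
    _ = ∫⁻ p, g p.1 * h p.2 ∂(μ.toSphere.prod (.volumeIoiPow (finrank ℝ E - 1))) := by
        rw [← μ.measurePreserving_homeomorphUnitSphereProd.lintegral_comp_emb
          (Homeomorph.measurableEmbedding _)]
        simp
    _ = _ := by
        rw [lintegral_prod_mul (f := fun u : sphere (0 : E) 1 => g u)
          (g := fun r : Ioi (0 : ℝ) => h r) (by fun_prop) (by fun_prop), Measure.volumeIoiPow,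
          lintegral_withDensity_eq_lintegral_mul _ (by fun_prop) (by fun_prop)]
        exact congrArg _ (lintegral_subtype_comap measurableSet_Ioi
          (fun r => ENNReal.ofReal (r ^ (finrank ℝ E - 1)) * h r))

theorem lintegral_comp_norm {h : ℝ → ℝ≥0∞} (hh : Measurable h) :
    ∫⁻ x, h ‖x‖ ∂μ = finrank ℝ E * μ (ball 0 1) *
      ∫⁻ r in Ioi 0, ENNReal.ofReal (r ^ (finrank ℝ E - 1)) * h r := by
  have key := lintegral_comp_smul_inv_norm_mul_comp_norm μ (g := fun _ => 1) measurable_const hh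
  rw [lintegral_const, μ.toSphere_apply_univ, one_mul] at key
  simpa only [one_mul] using key

end PolarDecomposition

theorem lintegral_comp_inner_comp_norm_eq_comp_apply {ι : Type*} [Fintype ι]
    {z : EuclideanSpace ℝ ι} (hz : ‖z‖ = 1) (i : ι) (F : ℝ → ℝ → ℝ≥0∞) :
    ∫⁻ x, F ⟪z, x⟫ ‖x‖ = ∫⁻ x : EuclideanSpace ℝ ι, F (x i) ‖x‖ := by
  have hz' : Orthonormal ℝ (({i} : Set ι).domRestrict fun _ => z) :=
    ⟨fun _ => hz, fun j k hjk => (hjk (Subsingleton.elim j k)).elim⟩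
  obtain ⟨b, hb⟩ := hz'.exists_orthonormalBasis_extension_of_card_eq (by simp)
  rw [← b.repr.symm.measurePreserving.lintegral_comp_emb
    b.repr.symm.toHomeomorph.measurableEmbedding]
  simp_rw [LinearIsometryEquiv.norm_map, ← hb i rfl, ← b.repr_apply_apply,
    LinearIsometryEquiv.apply_symm_apply]

lemma EuclideanSpace.norm_toLp_cons {n : ℕ} (t : ℝ) (w : Fin n → ℝ) :
    ‖WithLp.toLp 2 (Fin.cons t w : Fin (n + 1) → ℝ)‖ = √(t ^ 2 + ‖WithLp.toLp 2 w‖ ^ 2) := by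
  simp [EuclideanSpace.norm_eq, Fin.sum_univ_succ,
    Real.sq_sqrt (Finset.sum_nonneg fun _ _ => sq_nonneg _)]

theorem lintegral_comp_apply_zero_comp_norm_eq_lintegral_lintegral {n : ℕ} {F : ℝ → ℝ → ℝ≥0∞}
    (hF : Measurable (uncurry F)) :
    ∫⁻ x : ℝ^(n + 1), F (x 0) ‖x‖ = ∫⁻ t, ∫⁻ w : ℝ^n, F t √(t ^ 2 + ‖w‖ ^ 2) := by
  calc ∫⁻ x : ℝ^(n + 1), F (x 0) ‖x‖
      = ∫⁻ y : Fin (n + 1) → ℝ, F (y 0) ‖WithLp.toLp 2 y‖ :=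
        ((PiLp.volume_preserving_toLp _).lintegral_comp_emb
          (MeasurableEquiv.toLp 2 _).measurableEmbedding _).symm
    _ = ∫⁻ p : ℝ × (Fin n → ℝ), F p.1 ‖WithLp.toLp 2 (Fin.cons p.1 p.2 : Fin (n + 1) → ℝ)‖ := by
        rw [← (volume_preserving_piFinSuccAbove (fun _ => ℝ) 0).symm.lintegral_comp_emb
          (MeasurableEquiv.measurableEmbedding _)]
        simp only [MeasurableEquiv.piFinSuccAbove_symm_apply, Fin.insertNthEquiv_zero,
          Fin.consEquiv_apply, Fin.cons_zero]
        rfl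
    _ = ∫⁻ t, ∫⁻ w : Fin n → ℝ, F t ‖WithLp.toLp 2 (Fin.cons t w : Fin (n + 1) → ℝ)‖ := by
        rw [Measure.volume_eq_prod, lintegral_prod _ ?_]
        exact (hF.comp (measurable_fst.prodMk (by fun_prop))).aemeasurable
    _ = _ := by
        congr 1 with t
        rw [← (PiLp.volume_preserving_toLp _).lintegral_comp_emb
          (MeasurableEquiv.toLp 2 _).measurableEmbedding]
        simp only [EuclideanSpace.norm_toLp_cons]

lemma sin_pos_iff_of_mem_Ioo {θ : ℝ} (hθ : θ ∈ Ioo (-π) π) : 0 < sin θ ↔ 0 < θ :=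
  ⟨fun h => not_le.1 fun h' => h.not_ge (sin_nonpos_of_nonpos_of_neg_pi_le h' hθ.1.le),
    fun h => sin_pos_of_pos_of_lt_pi h hθ.2⟩

theorem lintegral_lintegral_Ioi_eq_polarCoord {Φ : ℝ → ℝ → ℝ≥0∞}
    (hΦ : Measurable (uncurry Φ)) :
    ∫⁻ t, ∫⁻ s in Ioi 0, Φ t s =
      ∫⁻ r in Ioi 0, ∫⁻ θ in Ioo 0 π, ENNReal.ofReal r * Φ (r * cos θ) (r * sin θ) := by
  have hupper : MeasurableSet ((univ : Set ℝ) ×ˢ Ioi (0 : ℝ)) :=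
    MeasurableSet.univ.prod measurableSet_Ioi
  have hpolar : EqOn (fun p : ℝ × ℝ => ENNReal.ofReal p.1 •
        (univ ×ˢ Ioi 0).indicator (uncurry Φ) (polarCoord.symm p))
      ((Ioi 0 ×ˢ Ioo 0 π).indicator
        fun p => ENNReal.ofReal p.1 * Φ (p.1 * cos p.2) (p.1 * sin p.2))
      polarCoord.target := by
    rintro ⟨r, θ⟩ ⟨hr, hθ⟩
    have hr : 0 < r := hr
    by_cases h : 0 < θ <;>
      simp [polarCoord_symm_apply, indicator, hr, h, mul_pos_iff_of_pos_left hr,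
        sin_pos_iff_of_mem_Ioo hθ, hθ.2]
  calc ∫⁻ t, ∫⁻ s in Ioi 0, Φ t s
      = ∫⁻ p in univ ×ˢ Ioi 0, uncurry Φ p := by
        rw [Measure.volume_eq_prod, ← Measure.prod_restrict, lintegral_prod _ hΦ.aemeasurable,
          Measure.restrict_univ]
        rfl
    _ = ∫⁻ p in Ioi 0 ×ˢ Ioo 0 π, ENNReal.ofReal p.1 * Φ (p.1 * cos p.2) (p.1 * sin p.2) := by
        rw [← lintegral_indicator hupper, ← lintegral_comp_polarCoord_symm,
          setLIntegral_congr_fun polarCoord.open_target.measurableSet hpolar,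
          setLIntegral_indicator (measurableSet_Ioi.prod measurableSet_Ioo),
          inter_eq_left.2 ?_]
        rintro ⟨r, θ⟩ ⟨hr, hθ⟩
        exact ⟨hr, neg_neg_of_pos pi_pos |>.trans hθ.1, hθ.2⟩
    _ = _ := by
        rw [Measure.volume_eq_prod, ← Measure.prod_restrict, lintegral_prod _ (by fun_prop)]

theorem lintegral_comp_apply_zero_comp_norm_eq_polarCoord {n : ℕ} {G : ℝ → ℝ → ℝ≥0∞}
    (hG : Measurable (uncurry G)) :
    ∫⁻ x : ℝ^(n + 2), G (x 0) ‖x‖ = (n + 1) * volume (ball (0 : ℝ^(n + 1)) 1) *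
      ∫⁻ r in Ioi 0, ∫⁻ θ in Ioo 0 π,
        ENNReal.ofReal (r ^ (n + 1) * sin θ ^ n) * G (r * cos θ) r := by
  rw [lintegral_comp_apply_zero_comp_norm_eq_lintegral_lintegral hG]
  calc ∫⁻ t, ∫⁻ w : ℝ^(n + 1), G t √(t ^ 2 + ‖w‖ ^ 2)
      = ∫⁻ t, (n + 1) * volume (ball (0 : ℝ^(n + 1)) 1) *
          ∫⁻ s in Ioi 0, ENNReal.ofReal (s ^ n) * G t √(t ^ 2 + s ^ 2) := by
        congr 1 with t
        rw [lintegral_comp_norm volume (h := fun ρ => G t √(t ^ 2 + ρ ^ 2)) (by fun_prop)]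
        simp
    _ = _ := by
        rw [lintegral_const_mul _ (by fun_prop),
          lintegral_lintegral_Ioi_eq_polarCoord (by fun_prop)]
        congr 1
        refine setLIntegral_congr_fun measurableSet_Ioi fun r (hr : 0 < r) => ?_
        refine lintegral_congr fun θ => ?_
        have hnorm : √((r * cos θ) ^ 2 + (r * sin θ) ^ 2) = r := by
          rw [mul_pow, mul_pow, ← mul_add, cos_sq_add_sin_sq, mul_one, sqrt_sq hr.le]
        rw [hnorm, ← mul_assoc, ← ENNReal.ofReal_mul hr.le, mul_pow, pow_succ]
        ring_nf

theorem lintegral_toSphere_comp_inner_mul_lintegral_radial {n : ℕ} {z : ℝ^(n + 2)}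
    (hz : ‖z‖ = 1) {g h : ℝ → ℝ≥0∞} (hg : Measurable g) (hh : Measurable h) :
    (∫⁻ u : sphere (0 : ℝ^(n + 2)) 1, g ⟪z, u⟫ ∂volume.toSphere) *
        ∫⁻ r in Ioi 0, ENNReal.ofReal (r ^ (n + 1)) * h r =
      (n + 1) * volume (ball (0 : ℝ^(n + 1)) 1) *
        (∫⁻ θ in Ioo 0 π, ENNReal.ofReal (sin θ ^ n) * g (cos θ)) *
          ∫⁻ r in Ioi 0, ENNReal.ofReal (r ^ (n + 1)) * h r := by
  have hpolar := lintegral_comp_smul_inv_norm_mul_comp_norm (volume : Measure (ℝ^(n + 2)))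
    (g := fun y => g ⟪z, y⟫) (hg.comp (by fun_prop)) hh
  rw [finrank_euclideanSpace_fin, Nat.add_succ_sub_one] at hpolar
  simp only [inner_smul_right] at hpolar
  rw [← hpolar, lintegral_comp_inner_comp_norm_eq_comp_apply hz 0 (fun a ρ => g (ρ⁻¹ * a) * h ρ),
    lintegral_comp_apply_zero_comp_norm_eq_polarCoord (G := fun a ρ => g (ρ⁻¹ * a) * h ρ)
      (by fun_prop),
    mul_assoc _ (∫⁻ θ in Ioo 0 π, _)]
  congr 1
  calc ∫⁻ r in Ioi 0, ∫⁻ θ in Ioo 0 π,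
        ENNReal.ofReal (r ^ (n + 1) * sin θ ^ n) * (g (r⁻¹ * (r * cos θ)) * h r)
      = ∫⁻ r in Ioi 0, ∫⁻ θ in Ioo 0 π,
          ENNReal.ofReal (r ^ (n + 1)) * h r * (ENNReal.ofReal (sin θ ^ n) * g (cos θ)) := by
        refine setLIntegral_congr_fun measurableSet_Ioi fun r (hr : 0 < r) => ?_
        refine lintegral_congr fun θ => ?_
        rw [inv_mul_cancel_left₀ hr.ne', ENNReal.ofReal_mul (by positivity)]
        ring
    _ = _ := by
        simp_rw [lintegral_const_mul _
          (by fun_prop : Measurable fun θ => ENNReal.ofReal (sin θ ^ n) * g (cos θ))]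
        rw [lintegral_mul_const _ (by fun_prop), mul_comm]

lemma lintegral_Ioi_pow_mul_indicator_Iio_one (n : ℕ) :
    ∫⁻ r in Ioi 0, ENNReal.ofReal (r ^ n) * (Iio 1).indicator 1 r =
      ENNReal.ofReal (1 / (n + 1)) := by
  have hcut : ∀ r, ENNReal.ofReal (r ^ n) * (Iio 1).indicator 1 r =
      (Iio 1).indicator (fun r => ENNReal.ofReal (r ^ n)) r := by
    intro r
    by_cases hr : r < 1 <;> simp [hr]
  simp_rw [hcut]
  rw [setLIntegral_indicator measurableSet_Iio, Iio_inter_Ioi,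
    ← ofReal_integral_eq_lintegral_ofReal, ← integral_Ioc_eq_integral_Ioo,
    ← integral_of_le zero_le_one, integral_pow]
  · simp
  · exact (continuous_pow n).integrableOn_Icc.mono_set Ioo_subset_Icc_self
  · filter_upwards [ae_restrict_mem measurableSet_Ioo] with r hr using pow_nonneg hr.1.le n

theorem lintegral_toSphere_comp_inner {n : ℕ} {z : ℝ^(n + 2)} (hz : ‖z‖ = 1)
    {g : ℝ → ℝ≥0∞} (hg : Measurable g) :
    ∫⁻ u : sphere (0 : ℝ^(n + 2)) 1, g ⟪z, u⟫ ∂volume.toSphere =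
      (n + 1) * volume (ball (0 : ℝ^(n + 1)) 1) *
        ∫⁻ θ in Ioo 0 π, ENNReal.ofReal (sin θ ^ n) * g (cos θ) := by
  have key := lintegral_toSphere_comp_inner_mul_lintegral_radial hz hg
    (h := (Iio 1).indicator 1) (measurable_const.indicator measurableSet_Iio)
  rw [lintegral_Ioi_pow_mul_indicator_Iio_one] at key
  exact (ENNReal.mul_left_inj (by positivity) ENNReal.ofReal_ne_top).1 key

theorem integral_toSphere_comp_inner {n : ℕ} {z : ℝ^(n + 2)} (hz : ‖z‖ = 1)
    {f : ℝ → ℝ} (hf : Measurable f) (hf₀ : 0 ≤ f) :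
    ∫ u : sphere (0 : ℝ^(n + 2)) 1, f ⟪z, u⟫ ∂volume.toSphere =
      (n + 1) * volume.real (ball (0 : ℝ^(n + 1)) 1) * ∫ θ in 0..π, f (cos θ) * sin θ ^ n := by
  have hangle : ∫ θ in 0..π, f (cos θ) * sin θ ^ n =
      (∫⁻ θ in Ioo 0 π, ENNReal.ofReal (sin θ ^ n) * ENNReal.ofReal (f (cos θ))).toReal := by
    rw [integral_of_le pi_pos.le, integral_Ioc_eq_integral_Ioo,
      integral_eq_lintegral_of_nonneg_ae _ (by fun_prop)]
    · simp_rw [ENNReal.ofReal_mul (hf₀ _), mul_comm]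
    · filter_upwards [ae_restrict_mem measurableSet_Ioo] with θ hθ
      exact mul_nonneg (hf₀ _) (pow_nonneg (sin_pos_of_pos_of_lt_pi hθ.1 hθ.2).le n)
  rw [integral_eq_lintegral_of_nonneg_ae (f := fun u : sphere (0 : ℝ^(n + 2)) 1 => f ⟪z, u⟫)
      (ae_of_all _ fun u => hf₀ _) (hf.comp (by fun_prop)).aestronglyMeasurable,
    lintegral_toSphere_comp_inner hz hf.ennreal_ofReal, hangle, ENNReal.toReal_mul,
    ENNReal.toReal_mul, measureReal_def]
  norm_cast

theorem integral_uniformSphere_comp_inner {n : ℕ} {z : ℝ^(n + 2)} (hz : ‖z‖ = 1)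
    {f : ℝ → ℝ} (hf : Measurable f) (hf₀ : 0 ≤ f) :
    ∫ x, f ⟪z, x⟫ ∂uniformSphere (n + 2) =
      (∫ θ in 0..π, f (cos θ) * sin θ ^ n) / ∫ θ in 0..π, sin θ ^ n := by
  have hvol := integral_toSphere_comp_inner hz (f := fun _ => 1) measurable_const
    fun _ => zero_le_one
  simp only [MeasureTheory.integral_const, smul_eq_mul, mul_one, one_mul] at hvol
  have hball : 0 < volume.real (ball (0 : ℝ^(n + 1)) 1) :=
    ENNReal.toReal_pos (measure_ball_pos _ _ one_pos).ne' measure_ball_lt_top.ne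
  have hW : 0 < ∫ θ in 0..π, sin θ ^ n := sinPowIntegral_pos n
  have hfz : Measurable fun x : ℝ^(n + 2) => f ⟪z, x⟫ := hf.comp (by fun_prop)
  rw [uniformSphere, MeasureTheory.integral_smul_measure,
    integral_map (by fun_prop) hfz.aestronglyMeasurable, integral_toSphere_comp_inner hz hf hf₀,
    ENNReal.toReal_inv, ← measureReal_def, hvol, smul_eq_mul]
  field_simp

/-- **Conditional expectation of the angle-variance kernel is constant.**
For `d ≥ 2`, the kernel `h(z, z′) = (arccos⟨z, z′⟩ − π/2)²` satisfies
`∫_{S^{d−1}} h(z, z′) dμ(z′) = β_d` for every `z ∈ S^{d−1}`, where `μ` is the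
uniform probability measure on the sphere. -/
theorem integral_kernel_uniform_sphere (d : ℕ) (hd : 2 ≤ d)
    (z : EuclideanSpace ℝ (Fin d)) (hz : z ∈ sphere (0 : EuclideanSpace ℝ (Fin d)) 1) :
    ∫ z', (Real.arccos ⟪z, z'⟫ - π / 2) ^ 2 ∂(uniformSphere d) = betaDim d := by
  obtain ⟨n, rfl⟩ : ∃ n, d = n + 2 := ⟨d - 2, by omega⟩
  have hangle : ∫ θ in 0..π, (arccos (cos θ) - π / 2) ^ 2 * sin θ ^ n =
      centeredSqSinPowIntegral n := by
    refine integral_congr fun θ hθ => ?_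
    rw [uIcc_of_le pi_pos.le] at hθ
    simp only [arccos_cos hθ.1 hθ.2]
  rw [integral_uniformSphere_comp_inner (f := fun t => (arccos t - π / 2) ^ 2)
      (mem_sphere_zero_iff_norm.1 hz) (by fun_prop) fun t => sq_nonneg _,
    hangle, centeredSqSinPowIntegral_eq_betaDim_mul, ← sinPowIntegral,
    mul_div_cancel_right₀ _ (sinPowIntegral_pos n).ne']
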